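/- arXiv:1411.3569 — 2 statements merged into one kernel-verified Lean document; each statement's English description precedes it below -/
import Mathlib

section
/- For n = 3, the set of monomials in the seven flag minors Δ_1, Δ_2, Δ_3, Δ_{12}, Δ_{13}, Δ_{23}, Δ_{123} that do not contain the product Δ_1 Δ_{23} is linearly independent over ℂ in ℂ[x_{ij}], and moreover the leading monomials (with respect to the lexicographic order with x_{ij} ≻ x_{kl} iff i < k or i = k, j < l) of these products are pairwise distinct. -/
open MvPolynomial

noncomputable def x (i j : Fin 3) : MvPolynomial (Fin 3 × Fin 3) ℂ :=
  MvPolynomial.X (i, j)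

noncomputable def d1 : MvPolynomial (Fin 3 × Fin 3) ℂ := x 0 0
noncomputable def d2 : MvPolynomial (Fin 3 × Fin 3) ℂ := x 1 0
noncomputable def d3 : MvPolynomial (Fin 3 × Fin 3) ℂ := x 2 0
noncomputable def d12 : MvPolynomial (Fin 3 × Fin 3) ℂ := x 0 0 * x 1 1 - x 1 0 * x 0 1
noncomputable def d13 : MvPolynomial (Fin 3 × Fin 3) ℂ := x 0 0 * x 2 1 - x 2 0 * x 0 1
noncomputable def d23 : MvPolynomial (Fin 3 × Fin 3) ℂ := x 1 0 * x 2 1 - x 2 0 * x 1 1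
noncomputable def d123 : MvPolynomial (Fin 3 × Fin 3) ℂ :=
  Matrix.det (Matrix.of fun i j : Fin 3 => x i j)

/-- The monomial in the seven flag minors with exponent vector `e`
(coordinates: `Δ_1, Δ_2, Δ_3, Δ_{12}, Δ_{13}, Δ_{23}, Δ_{123}`). -/
noncomputable def minorMonomial (e : Fin 7 → ℕ) : MvPolynomial (Fin 3 × Fin 3) ℂ :=
  d1 ^ e 0 * d2 ^ e 1 * d3 ^ e 2 * d12 ^ e 3 * d13 ^ e 4 * d23 ^ e 5 * d123 ^ e 6

/-- Exponent vectors of monomials in the flag minors that do not contain the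
product `Δ_1 Δ_{23}`. -/
def GoodExp : Type := {e : Fin 7 → ℕ // ¬ (e 0 ≠ 0 ∧ e 5 ≠ 0)}

/-- Lexicographic order on exponent vectors of monomials in `x_{ij}`:
variable order `x_{ij} ≻ x_{kl}` iff `i < k` or (`i = k` and `j < l`). -/
def MonGt (a b : (Fin 3 × Fin 3) →₀ ℕ) : Prop :=
  ∃ p : Fin 3 × Fin 3, b p < a p ∧
    ∀ q : Fin 3 × Fin 3, (q.1 < p.1 ∨ (q.1 = p.1 ∧ q.2 < p.2)) → a q = b q

/-- `m` is the leading monomial of `P` for the lexicographic order. -/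
def IsLeadingMonomial (P : MvPolynomial (Fin 3 × Fin 3) ℂ)
    (m : (Fin 3 × Fin 3) →₀ ℕ) : Prop :=
  MvPolynomial.coeff m P ≠ 0 ∧
    ∀ m', MvPolynomial.coeff m' P ≠ 0 → m' ≠ m → MonGt m m'

/-! ### Auxiliary lex-order infrastructure -/

set_option maxHeartbeats 1000000

abbrev Mon := (Fin 3 × Fin 3) →₀ ℕ

def idx : Fin 3 × Fin 3 ≃ Fin 9 where
  toFun p := ⟨3 * p.1.val + p.2.val, by omega⟩
  invFun k := (⟨k.val / 3, by omega⟩, ⟨k.val % 3, by omega⟩)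
  left_inv := by decide
  right_inv := by decide

lemma idx_lt_iff : ∀ (q p : Fin 3 × Fin 3),
    idx q < idx p ↔ (q.1 < p.1 ∨ (q.1 = p.1 ∧ q.2 < p.2)) := by decide

noncomputable def T : Mon → Lex (Fin 9 →₀ ℕ) := fun f => toLex (Finsupp.domCongr idx f)

lemma T_add (a b : Mon) : T (a + b) = T a + T b := by simp [T, map_add]

lemma T_inj : Function.Injective T := fun a b h => by
  simpa [T] using (Finsupp.domCongr idx).injective (toLex.injective h)

lemma lex_lt_iff {f g : Fin 9 →₀ ℕ} :
    toLex f < toLex g ↔ ∃ j, (∀ d, d < j → f d = g d) ∧ f j < g j :=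
  Finsupp.lex_def

lemma domCongr_apply' (f : Mon) (j : Fin 9) :
    (Finsupp.domCongr idx f : Fin 9 →₀ ℕ) j = f (idx.symm j) := rfl

lemma monGt_iff {a b : Mon} : MonGt a b ↔ T b < T a := by
  rw [T, T, lex_lt_iff]
  constructor
  · rintro ⟨p, hlt, hq⟩
    refine ⟨idx p, fun d hd => ?_, ?_⟩
    · rw [domCongr_apply', domCongr_apply']
      exact (hq _ ((idx_lt_iff _ _).mp (by rwa [Equiv.apply_symm_apply]))).symm
    · rw [domCongr_apply', domCongr_apply', Equiv.symm_apply_apply]; exact hlt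
  · rintro ⟨j, hd, hj⟩
    refine ⟨idx.symm j, by simpa [domCongr_apply'] using hj, fun q hq => ?_⟩
    have hlt : idx q < j := by
      have := (idx_lt_iff q (idx.symm j)).mpr hq
      rwa [Equiv.apply_symm_apply] at this
    have := hd (idx q) hlt
    simpa [domCongr_apply'] using this.symm

lemma MonGt_ne {a b : Mon} (h : MonGt a b) : a ≠ b := by
  rintro rfl
  obtain ⟨p, hp, -⟩ := h
  exact lt_irrefl _ hp

/-! ### Leading monomial predicate via `T` -/

def LM (P : MvPolynomial (Fin 3 × Fin 3) ℂ) (m : Mon) : Prop :=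
  MvPolynomial.coeff m P ≠ 0 ∧ ∀ m', MvPolynomial.coeff m' P ≠ 0 → T m' ≤ T m

lemma LM.isLeading {P : MvPolynomial (Fin 3 × Fin 3) ℂ} {m : Mon} (h : LM P m) :
    IsLeadingMonomial P m := by
  refine ⟨h.1, fun m' hm' hne => monGt_iff.mpr ?_⟩
  exact lt_of_le_of_ne (h.2 m' hm') (fun he => hne (T_inj he))

lemma LM.leading_eq {P : MvPolynomial (Fin 3 × Fin 3) ℂ} {m m' : Mon} (h : LM P m)
    (h' : IsLeadingMonomial P m') : m' = m := by
  by_contra hne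
  have h1 : MonGt m' m := h'.2 m h.1 (Ne.symm hne)
  have h2 : T m' ≤ T m := h.2 m' h'.1
  exact absurd (monGt_iff.mp h1) (not_lt.mpr h2)

lemma LM.mul {P Q : MvPolynomial (Fin 3 × Fin 3) ℂ} {m n : Mon}
    (hP : LM P m) (hQ : LM Q n) : LM (P * Q) (m + n) := by
  constructor
  · rw [coeff_mul, Finset.sum_eq_single_of_mem (m, n) (Finset.HasAntidiagonal.mem_antidiagonal.mpr rfl)]
    · exact mul_ne_zero hP.1 hQ.1
    · rintro ⟨u, v⟩ huv hne
      by_contra h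
      have h1 : T u ≤ T m := hP.2 u (left_ne_zero_of_mul h)
      have h2 : T v ≤ T n := hQ.2 v (right_ne_zero_of_mul h)
      have heq : T u + T v = T m + T n := by
        rw [← T_add, ← T_add, Finset.HasAntidiagonal.mem_antidiagonal.mp huv]
      have hu : T u = T m := by
        rcases lt_or_eq_of_le h1 with hlt | h
        · exact absurd heq (ne_of_lt (add_lt_add_of_lt_of_le hlt h2))
        · exact h
      have hv : T v = T n := by
        rw [hu] at heq
        exact add_left_cancel heq
      exact hne (Prod.ext (T_inj hu) (T_inj hv))
  · intro m' hm'
    rw [coeff_mul] at hm'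
    obtain ⟨⟨u, v⟩, huv, hne⟩ := Finset.exists_ne_zero_of_sum_ne_zero hm'
    have h1 : T u ≤ T m := hP.2 u (left_ne_zero_of_mul hne)
    have h2 : T v ≤ T n := hQ.2 v (right_ne_zero_of_mul hne)
    calc T m' = T u + T v := by rw [← T_add, Finset.HasAntidiagonal.mem_antidiagonal.mp huv]
    _ ≤ T m + T n := add_le_add h1 h2
    _ = T (m + n) := (T_add m n).symm

lemma LM.one : LM (1 : MvPolynomial (Fin 3 × Fin 3) ℂ) 0 := by
  constructor
  · simp
  · intro m' hm'
    rcases eq_or_ne (0 : Mon) m' with h | h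
    · exact le_of_eq (congrArg T h.symm)
    · rw [coeff_one, if_neg h] at hm'; exact absurd rfl hm'

lemma LM.pow {P : MvPolynomial (Fin 3 × Fin 3) ℂ} {m : Mon} (hP : LM P m) (k : ℕ) :
    LM (P ^ k) (k • m) := by
  induction k with
  | zero => simpa using LM.one
  | succ k ih =>
    rw [pow_succ, succ_nsmul]
    exact ih.mul hP

/-! ### Leading monomials of the seven minors -/

noncomputable def s (i j : Fin 3) : Mon := Finsupp.single (i, j) 1

lemma LM_monomial (a : Mon) : LM (monomial a (1 : ℂ)) a := by
  constructor
  · simp [coeff_monomial]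
  · intro m' hm'
    rcases eq_or_ne a m' with h | h
    · exact le_of_eq (congrArg T h.symm)
    · rw [coeff_monomial, if_neg h] at hm'; exact absurd rfl hm'

lemma LM_binom {a b : Mon} (h : MonGt a b) :
    LM ((monomial a (1 : ℂ)) - monomial b 1) a := by
  have hab : b ≠ a := Ne.symm (MonGt_ne h)
  constructor
  · simp [coeff_sub, coeff_monomial, if_neg hab]
  · intro m' hm'
    rcases eq_or_ne a m' with h1 | h1
    · exact le_of_eq (congrArg T h1.symm)
    rcases eq_or_ne b m' with h2 | h2
    · exact h2 ▸ (monGt_iff.mp h).le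
    · rw [coeff_sub, coeff_monomial, coeff_monomial, if_neg h1, if_neg h2] at hm'
      exact absurd (by ring) hm'

lemma LM_d1 : LM d1 (s 0 0) := LM_monomial _
lemma LM_d2 : LM d2 (s 1 0) := LM_monomial _
lemma LM_d3 : LM d3 (s 2 0) := LM_monomial _

lemma d12_eq : d12 = monomial (s 0 0 + s 1 1) 1 - monomial (s 1 0 + s 0 1) 1 := by
  simp only [d12, x, MvPolynomial.X, monomial_mul, one_mul]
  rfl

lemma d13_eq : d13 = monomial (s 0 0 + s 2 1) 1 - monomial (s 2 0 + s 0 1) 1 := by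
  simp only [d13, x, MvPolynomial.X, monomial_mul, one_mul]
  rfl

lemma d23_eq : d23 = monomial (s 1 0 + s 2 1) 1 - monomial (s 2 0 + s 1 1) 1 := by
  simp only [d23, x, MvPolynomial.X, monomial_mul, one_mul]
  rfl

lemma gt12 : MonGt (s 0 0 + s 1 1) (s 1 0 + s 0 1) := by
  refine ⟨(0,0), ?_, fun q hq => ?_⟩
  · simp [s, Finsupp.single_apply, Prod.ext_iff, Fin.ext_iff]
  · fin_cases q <;> first
      | (exfalso; revert hq; decide)
      | simp [s, Finsupp.single_apply, Prod.ext_iff, Fin.ext_iff]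

lemma gt13 : MonGt (s 0 0 + s 2 1) (s 2 0 + s 0 1) := by
  refine ⟨(0,0), ?_, fun q hq => ?_⟩
  · simp [s, Finsupp.single_apply, Prod.ext_iff, Fin.ext_iff]
  · fin_cases q <;> first
      | (exfalso; revert hq; decide)
      | simp [s, Finsupp.single_apply, Prod.ext_iff, Fin.ext_iff]

lemma gt23 : MonGt (s 1 0 + s 2 1) (s 2 0 + s 1 1) := by
  refine ⟨(1,0), ?_, fun q hq => ?_⟩
  · simp [s, Finsupp.single_apply, Prod.ext_iff, Fin.ext_iff]
  · fin_cases q <;> first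
      | (exfalso; revert hq; decide)
      | simp [s, Finsupp.single_apply, Prod.ext_iff, Fin.ext_iff]

lemma LM_d12 : LM d12 (s 0 0 + s 1 1) := d12_eq ▸ LM_binom gt12
lemma LM_d13 : LM d13 (s 0 0 + s 2 1) := d13_eq ▸ LM_binom gt13
lemma LM_d23 : LM d23 (s 1 0 + s 2 1) := d23_eq ▸ LM_binom gt23

noncomputable def a1 : Mon := s 0 0 + s 1 1 + s 2 2
noncomputable def a2 : Mon := s 0 0 + s 1 2 + s 2 1
noncomputable def a3 : Mon := s 0 1 + s 1 0 + s 2 2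
noncomputable def a4 : Mon := s 0 1 + s 1 2 + s 2 0
noncomputable def a5 : Mon := s 0 2 + s 1 0 + s 2 1
noncomputable def a6 : Mon := s 0 2 + s 1 1 + s 2 0

lemma d123_eq : d123 = monomial a1 1 - monomial a2 1 - monomial a3 1
    + monomial a4 1 + monomial a5 1 - monomial a6 1 := by
  simp only [d123, Matrix.det_fin_three, Matrix.of_apply, x, MvPolynomial.X,
    monomial_mul, one_mul, mul_one]
  rfl

lemma gtA2 : MonGt a1 a2 := by
  refine ⟨(1,1), ?_, fun q hq => ?_⟩
  · simp [a1, a2, s, Finsupp.single_apply, Prod.ext_iff, Fin.ext_iff]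
  · fin_cases q <;> first
      | (exfalso; revert hq; decide)
      | simp [a1, a2, s, Finsupp.single_apply, Prod.ext_iff, Fin.ext_iff]

lemma gtA3 : MonGt a1 a3 := by
  refine ⟨(0,0), ?_, fun q hq => ?_⟩
  · simp [a1, a3, s, Finsupp.single_apply, Prod.ext_iff, Fin.ext_iff]
  · fin_cases q <;> first
      | (exfalso; revert hq; decide)
      | simp [a1, a3, s, Finsupp.single_apply, Prod.ext_iff, Fin.ext_iff]

lemma gtA4 : MonGt a1 a4 := by
  refine ⟨(0,0), ?_, fun q hq => ?_⟩
  · simp [a1, a4, s, Finsupp.single_apply, Prod.ext_iff, Fin.ext_iff]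
  · fin_cases q <;> first
      | (exfalso; revert hq; decide)
      | simp [a1, a4, s, Finsupp.single_apply, Prod.ext_iff, Fin.ext_iff]

lemma gtA5 : MonGt a1 a5 := by
  refine ⟨(0,0), ?_, fun q hq => ?_⟩
  · simp [a1, a5, s, Finsupp.single_apply, Prod.ext_iff, Fin.ext_iff]
  · fin_cases q <;> first
      | (exfalso; revert hq; decide)
      | simp [a1, a5, s, Finsupp.single_apply, Prod.ext_iff, Fin.ext_iff]

lemma gtA6 : MonGt a1 a6 := by
  refine ⟨(0,0), ?_, fun q hq => ?_⟩
  · simp [a1, a6, s, Finsupp.single_apply, Prod.ext_iff, Fin.ext_iff]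
  · fin_cases q <;> first
      | (exfalso; revert hq; decide)
      | simp [a1, a6, s, Finsupp.single_apply, Prod.ext_iff, Fin.ext_iff]

lemma LM_d123 : LM d123 a1 := by
  constructor
  · rw [d123_eq]
    simp only [coeff_sub, coeff_add, coeff_monomial]
    rw [if_neg (Ne.symm (MonGt_ne gtA2)), if_neg (Ne.symm (MonGt_ne gtA3)),
      if_neg (Ne.symm (MonGt_ne gtA4)), if_neg (Ne.symm (MonGt_ne gtA5)),
      if_neg (Ne.symm (MonGt_ne gtA6))]
    norm_num
  · intro m' hm'
    by_cases h1 : m' = a1; · exact le_of_eq (congrArg T h1)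
    by_cases h2 : m' = a2; · exact h2 ▸ (monGt_iff.mp gtA2).le
    by_cases h3 : m' = a3; · exact h3 ▸ (monGt_iff.mp gtA3).le
    by_cases h4 : m' = a4; · exact h4 ▸ (monGt_iff.mp gtA4).le
    by_cases h5 : m' = a5; · exact h5 ▸ (monGt_iff.mp gtA5).le
    by_cases h6 : m' = a6; · exact h6 ▸ (monGt_iff.mp gtA6).le
    exfalso; apply hm'
    rw [d123_eq]
    simp only [coeff_sub, coeff_add, coeff_monomial]
    rw [if_neg (Ne.symm h1), if_neg (Ne.symm h2), if_neg (Ne.symm h3),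
      if_neg (Ne.symm h4), if_neg (Ne.symm h5), if_neg (Ne.symm h6)]
    ring

/-! ### The leading monomial of a minor monomial -/

noncomputable def L (e : Fin 7 → ℕ) : Mon :=
  e 0 • s 0 0 + e 1 • s 1 0 + e 2 • s 2 0 + e 3 • (s 0 0 + s 1 1)
    + e 4 • (s 0 0 + s 2 1) + e 5 • (s 1 0 + s 2 1) + e 6 • a1

lemma LM_minorMonomial (e : Fin 7 → ℕ) : LM (minorMonomial e) (L e) :=
  ((((((LM_d1.pow (e 0)).mul (LM_d2.pow (e 1))).mul (LM_d3.pow (e 2))).mul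
    (LM_d12.pow (e 3))).mul (LM_d13.pow (e 4))).mul (LM_d23.pow (e 5))).mul
    (LM_d123.pow (e 6))

lemma L_inj {e e' : Fin 7 → ℕ} (he : ¬(e 0 ≠ 0 ∧ e 5 ≠ 0))
    (he' : ¬(e' 0 ≠ 0 ∧ e' 5 ≠ 0)) (h : L e = L e') : e = e' := by
  have h00 := DFunLike.congr_fun h ((0, 0) : Fin 3 × Fin 3)
  have h10 := DFunLike.congr_fun h ((1, 0) : Fin 3 × Fin 3)
  have h11 := DFunLike.congr_fun h ((1, 1) : Fin 3 × Fin 3)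
  have h20 := DFunLike.congr_fun h ((2, 0) : Fin 3 × Fin 3)
  have h21 := DFunLike.congr_fun h ((2, 1) : Fin 3 × Fin 3)
  have h22 := DFunLike.congr_fun h ((2, 2) : Fin 3 × Fin 3)
  simp [L, a1, s, Finsupp.single_apply, Prod.ext_iff, Fin.ext_iff]
    at h00 h10 h11 h20 h21 h22
  have E0 : e 0 = e' 0 := by omega
  have E1 : e 1 = e' 1 := by omega
  have E2 : e 2 = e' 2 := by omega
  have E3 : e 3 = e' 3 := by omega
  have E4 : e 4 = e' 4 := by omega
  have E5 : e 5 = e' 5 := by omega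
  have E6 : e 6 = e' 6 := by omega
  funext i
  fin_cases i
  exacts [E0, E1, E2, E3, E4, E5, E6]

lemma goodExp_ext {e e' : GoodExp} (h : e.1 = e'.1) : e = e' := Subtype.ext h

/-! ### Main theorem -/

/-- for `n = 3`, the monomials in the seven flag minors not
containing the product `Δ_1 Δ_{23}` are linearly independent over `ℂ`, and
their leading monomials (for the lexicographic order) are pairwise
distinct. -/
theorem tableau_monomials_linearIndependent_n3 :
    LinearIndependent ℂ (fun e : GoodExp => minorMonomial e.1) ∧
    ∀ e e' : GoodExp, e ≠ e' →
      ∀ m m', IsLeadingMonomial (minorMonomial e.1) m →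
        IsLeadingMonomial (minorMonomial e'.1) m' → m ≠ m' := by
  constructor
  · rw [linearIndependent_iff]
    intro l hl
    by_contra hne
    obtain ⟨e, heS, hmax⟩ := Finset.exists_max_image l.support
      (fun e : GoodExp => T (L e.1)) (Finsupp.support_nonempty_iff.mpr hne)
    have hcoeff : MvPolynomial.coeff (L e.1)
        (Finsupp.linearCombination ℂ (fun e : GoodExp => minorMonomial e.1) l)
          = l e * MvPolynomial.coeff (L e.1) (minorMonomial e.1) := by
      rw [Finsupp.linearCombination_apply, Finsupp.sum, coeff_sum]
      rw [Finset.sum_eq_single e]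
      · rw [coeff_smul, smul_eq_mul]
      · intro e' he' hne'
        rw [coeff_smul, smul_eq_mul]
        have hz : MvPolynomial.coeff (L e.1) (minorMonomial e'.1) = 0 := by
          by_contra hc
          have h1 : T (L e.1) ≤ T (L e'.1) := (LM_minorMonomial e'.1).2 _ hc
          have h2 : T (L e'.1) ≤ T (L e.1) := hmax e' he'
          have : L e'.1 = L e.1 := T_inj (le_antisymm h2 h1)
          exact hne' (goodExp_ext (L_inj e'.2 e.2 this))
        rw [hz, mul_zero]
      · intro h; exact absurd heS h
    rw [hl] at hcoeff
    simp only [coeff_zero] at hcoeff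
    rcases mul_eq_zero.mp hcoeff.symm with h | h
    · exact Finsupp.mem_support_iff.mp heS h
    · exact (LM_minorMonomial e.1).1 h
  · intro e e' hne m m' hm hm'
    rw [(LM_minorMonomial e.1).leading_eq hm, (LM_minorMonomial e'.1).leading_eq hm']
    intro h
    exact hne (goodExp_ext (L_inj e.2 e'.2 h))
end

section
/- For n = 3, the leading-monomial map is injective on tableau monomials: if T ≠ T' are semistandard Young tableaux in alphabet [3], then the leading monomials of Δ_T and Δ_{T'} (with respect to the lexicographic order) are distinct, namely X^{A(T)} ≠ X^{A(T')}. -/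
/-- Semistandard Young tableaux in the alphabet `[3]` (entries `< 3`,
0-indexed), bundled with their shape. -/
def SSYT3 := {p : Σ μ : YoungDiagram, SemistandardYoungTableau μ //
  ∀ c ∈ p.1.cells, p.2 c.1 c.2 < 3}

/-- The exponent vector of the leading monomial `X^{A(T)}` of the tableau
monomial `Δ_T`: a box of `T` in row `j` (0-indexed) filled with entry `i`
contributes the variable `x_{ij}`. -/
noncomputable def tableauMonomial (p : SSYT3) : (ℕ × ℕ) →₀ ℕ :=
  ∑ c ∈ p.1.1.cells, Finsupp.single (p.1.2 c.1 c.2, c.1) 1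

open Finset

/-- A downward-closed finset of naturals is an initial segment. -/
lemma SSYT3.dc_eq_range (s : Finset ℕ) (hs : ∀ k ∈ s, ∀ j ≤ k, j ∈ s) :
    s = Finset.range s.card := by
  have key : ∀ k, k ∈ s ↔ k < s.card := by
    intro k
    constructor
    · intro hk
      have h1 : Finset.range (k+1) ⊆ s := fun j hj =>
        hs k hk j (Nat.lt_succ_iff.mp (mem_range.mp hj))
      have := Finset.card_le_card h1
      simpa using this
    · intro hk
      by_contra hk'
      have h1 : s ⊆ Finset.range k := by
        intro m hm
        rw [mem_range]
        by_contra hm'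
        exact hk' (hs m hm k (Nat.le_of_not_lt hm'))
      have := Finset.card_le_card h1
      simp at this
      omega
  ext k; simp [key]

lemma SSYT3.card_le_filter_eq_sum (f : ℕ → ℕ) (L i : ℕ) :
    ((Finset.range L).filter (fun k => f k ≤ i)).card
      = ∑ b ∈ Finset.range (i+1), ((Finset.range L).filter (fun k => f k = b)).card := by
  rw [Finset.card_eq_sum_card_fiberwise (f := f) (t := Finset.range (i+1))
    (by intro x hx; simp at hx ⊢; omega)]
  refine Finset.sum_congr rfl ?_
  intro b hb
  rw [Finset.filter_filter]
  congr 1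
  apply Finset.filter_congr
  intro k _
  simp at hb
  exact ⟨fun ⟨_, h⟩ => h, fun h => ⟨by omega, h⟩⟩

lemma SSYT3.filter_le_eq_range (f : ℕ → ℕ) (L : ℕ)
    (hf : ∀ k1 k2, k1 ≤ k2 → k2 < L → f k1 ≤ f k2) (i : ℕ) :
    (Finset.range L).filter (fun k => f k ≤ i)
      = Finset.range (((Finset.range L).filter (fun k => f k ≤ i)).card) := by
  apply SSYT3.dc_eq_range
  intro k hk j hj
  simp only [mem_filter, mem_range] at hk ⊢
  exact ⟨lt_of_le_of_lt hj hk.1, le_trans (hf j k hj hk.1) hk.2⟩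

/-- A weakly increasing sequence with values `< 3` is determined by the
number of occurrences of each value. -/
lemma SSYT3.mono_eq_of_counts (f g : ℕ → ℕ) (L M : ℕ)
    (hf : ∀ k1 k2, k1 ≤ k2 → k2 < L → f k1 ≤ f k2)
    (hg : ∀ k1 k2, k1 ≤ k2 → k2 < M → g k1 ≤ g k2)
    (hfb : ∀ k < L, f k < 3) (hgb : ∀ k < M, g k < 3)
    (hc : ∀ i, ((Finset.range L).filter (fun k => f k = i)).card
      = ((Finset.range M).filter (fun k => g k = i)).card) :
    L = M ∧ ∀ k < L, f k = g k := by
  have hcard : ∀ i, ((Finset.range L).filter (fun k => f k ≤ i)).card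
      = ((Finset.range M).filter (fun k => g k ≤ i)).card := by
    intro i
    rw [SSYT3.card_le_filter_eq_sum, SSYT3.card_le_filter_eq_sum]
    exact Finset.sum_congr rfl fun b _ => hc b
  have hLM : L = M := by
    have h1 : (Finset.range L).filter (fun k => f k ≤ 2) = Finset.range L := by
      apply Finset.filter_true_of_mem
      intro k hk; have := hfb k (mem_range.mp hk); omega
    have h2 : (Finset.range M).filter (fun k => g k ≤ 2) = Finset.range M := by
      apply Finset.filter_true_of_mem
      intro k hk; have := hgb k (mem_range.mp hk); omega
    have := hcard 2
    rw [h1, h2] at this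
    simpa using this
  refine ⟨hLM, ?_⟩
  intro k hk
  have key : ∀ i, f k ≤ i ↔ g k ≤ i := by
    intro i
    have e1 := SSYT3.filter_le_eq_range f L hf i
    have e2 := SSYT3.filter_le_eq_range g M hg i
    have m1 : k ∈ (Finset.range L).filter (fun k => f k ≤ i) ↔ f k ≤ i := by
      simp [hk]
    have m2 : k ∈ (Finset.range M).filter (fun k => g k ≤ i) ↔ g k ≤ i := by
      simp [hLM ▸ hk]
    rw [← m1, ← m2, e1, e2, hcard i]
  exact le_antisymm ((key (g k)).mpr le_rfl) ((key (f k)).mp le_rfl)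

/-- Evaluation of the exponent vector: the exponent of `x_{ij}` is the number
of boxes in row `j` filled with entry `i`. -/
lemma SSYT3.tm_apply (p : SSYT3) (i j : ℕ) :
    tableauMonomial p (i, j)
      = ((Finset.range (p.1.1.rowLen j)).filter (fun k => p.1.2 j k = i)).card := by
  obtain ⟨⟨μ, T⟩, hb⟩ := p
  show (∑ c ∈ μ.cells, Finsupp.single (T c.1 c.2, c.1) 1) (i, j) = _
  rw [Finset.sum_apply']
  simp only [Finsupp.single_apply]
  rw [← Finset.card_filter]
  apply Finset.card_bij (fun c _ => c.2)
  · rintro ⟨a, b⟩ hc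
    simp only [mem_filter, YoungDiagram.mem_cells, Prod.mk.injEq] at hc
    obtain ⟨hmem, hTi, haj⟩ := hc
    subst haj
    simp only [mem_filter, mem_range]
    exact ⟨YoungDiagram.mem_iff_lt_rowLen.mp hmem, hTi⟩
  · rintro ⟨a, b⟩ hc ⟨a', b'⟩ hc' hbb
    simp only [mem_filter, Prod.mk.injEq] at hc hc'
    simp only at hbb
    simp [hbb, hc.2.2, hc'.2.2]
  · intro k hk
    simp only [mem_filter, mem_range] at hk
    refine ⟨(j, k), ?_, rfl⟩
    simp [YoungDiagram.mem_iff_lt_rowLen, hk.1, hk.2]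

/-- for `n = 3`, the leading-monomial map is injective on
tableau monomials: distinct semistandard Young tableaux `T ≠ T'` in the
alphabet `[3]` have distinct leading monomials `X^{A(T)} ≠ X^{A(T')}`. -/
theorem leading_monomial_injective_n3 (p q : SSYT3) (h : p ≠ q) :
    tableauMonomial p ≠ tableauMonomial q := by
  intro heq
  apply h
  have hc : ∀ i j : ℕ,
      ((Finset.range (p.1.1.rowLen j)).filter (fun k => p.1.2 j k = i)).card
        = ((Finset.range (q.1.1.rowLen j)).filter (fun k => q.1.2 j k = i)).card := by
    intro i j
    rw [← SSYT3.tm_apply, ← SSYT3.tm_apply, heq]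
  obtain ⟨⟨μ, T⟩, hbp⟩ := p
  obtain ⟨⟨ν, S⟩, hbq⟩ := q
  have main : ∀ j : ℕ, μ.rowLen j = ν.rowLen j ∧
      ∀ k < μ.rowLen j, T j k = S j k := by
    intro j
    apply SSYT3.mono_eq_of_counts
    · intro k1 k2 hk hk2
      exact T.row_weak_of_le hk (YoungDiagram.mem_iff_lt_rowLen.mpr hk2)
    · intro k1 k2 hk hk2
      exact S.row_weak_of_le hk (YoungDiagram.mem_iff_lt_rowLen.mpr hk2)
    · intro k hk
      exact hbp (j, k) ((μ.mem_cells _).mpr (YoungDiagram.mem_iff_lt_rowLen.mpr hk))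
    · intro k hk
      exact hbq (j, k) ((ν.mem_cells _).mpr (YoungDiagram.mem_iff_lt_rowLen.mpr hk))
    · intro i
      exact hc i j
  have hμν : μ = ν := by
    ext ⟨a, b⟩
    rw [μ.mem_cells, ν.mem_cells,
      YoungDiagram.mem_iff_lt_rowLen, YoungDiagram.mem_iff_lt_rowLen, (main a).1]
  subst hμν
  have hTS : T = S := by
    ext a b
    by_cases hab : (a, b) ∈ μ
    · exact (main a).2 b (YoungDiagram.mem_iff_lt_rowLen.mp hab)
    · rw [T.zeros hab, S.zeros hab]
  subst hTS
  rfl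
end
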